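/- arXiv:1911.11643 — 4 statements merged into one kernel-verified Lean document; each statement's English description precedes it below -/
import Mathlib

section
/- In the free group on a and b, every regular balanced even word, i.e. every product of the form b a^{r₁} b⁻¹ a^{r₂} b a^{r₃} b⁻¹ ⋯ b a^{r_{2m−1}} b⁻¹ with r₁ + r₂ + ⋯ + r_{2m−1} even, lies in the subgroup generated by a², b a² b⁻¹, and [b,a] = bab⁻¹a⁻¹. -/
/-!
Write `c = b a b⁻¹` and `H = ⟨a², c², c a⁻¹⟩`, so that `b a^r b⁻¹ = c^r` and the word is
`∏ c^{r_{2k+1}} a^{r_{2k+2}}`. Conjugation by `a` preserves `H`, and `c ≡ a` modulo `H`;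
hence `c^p ≡ a^p` and the whole word is congruent to `a^N` with `N = ∑ rᵢ`.
Since `N` is even, `a^N` is a power of `a² ∈ H`.
-/

open Finset Subgroup

theorem sum_range_two_mul {M : Type*} [AddCommMonoid M] (f : ℕ → M) (n : ℕ) :
    ∑ k ∈ range (2 * n), f k = ∑ k ∈ range n, (f (2 * k) + f (2 * k + 1)) := by
  induction n with
  | zero => simp
  | succ n ih => rw [Nat.mul_succ, sum_range_succ, sum_range_succ, sum_range_succ, ih, add_assoc]

namespace Subgroup

variable {G : Type*} [Group G] {H : Subgroup G}

theorem conj_mem_closure {s : Set G} {g : G} (hs : ∀ x ∈ s, g * x * g⁻¹ ∈ closure s)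
    {h : G} (hh : h ∈ closure s) : g * h * g⁻¹ ∈ closure s :=
  (closure_le ((closure s).comap (MulAut.conj g).toMonoidHom)).2 hs hh

/-- Conjugation by `g⁻¹` is conjugation by `g` followed by conjugation by `g⁻² ∈ H`. -/
theorem mem_normalizer_of_sq_mem {g : G} (hg : g ^ 2 ∈ H)
    (hconj : ∀ h ∈ H, g * h * g⁻¹ ∈ H) : g ∈ normalizer (H : Set G) := by
  refine mem_normalizer_iff.2 fun h => ⟨hconj h, fun hh => ?_⟩
  have e : h = (g ^ 2)⁻¹ * (g * (g * h * g⁻¹) * g⁻¹) * g ^ 2 := by group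
  rw [e]
  exact mul_mem (mul_mem (inv_mem hg) (hconj _ hh)) hg

theorem zpow_mul_zpow_neg_mem {x y : G} (hy : y ∈ normalizer (H : Set G)) (hxy : x * y⁻¹ ∈ H)
    (n : ℤ) : x ^ n * y ^ (-n) ∈ H := by
  have step (k : ℤ) : x ^ (k + 1) * y ^ (-(k + 1)) =
      x ^ k * y ^ (-k) * (y ^ k * (x * y⁻¹) * y ^ (-k)) := by group
  have hconj (k : ℤ) : y ^ k * (x * y⁻¹) * y ^ (-k) ∈ H := by
    simpa only [zpow_neg] using (mem_normalizer_iff.1 (zpow_mem hy k) _).1 hxy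
  induction n using Int.induction_on with
  | zero => simp
  | succ n ih => rw [step]; exact mul_mem ih (hconj n)
  | pred n ih =>
    rw [← mul_mem_cancel_right (hconj (-n - 1)), ← step]
    simpa using ih

theorem prod_zpow_mul_zpow_mul_zpow_neg_sum_mem {a c : G} (ha : a ∈ normalizer (H : Set G))
    (hca : c * a⁻¹ ∈ H) (p q : ℕ → ℤ) (n : ℕ) :
    ((List.range n).map fun k => c ^ p k * a ^ q k).prod *
      a ^ (-∑ k ∈ range n, (p k + q k)) ∈ H := by
  induction n with
  | zero => simp
  | succ n ih =>
    rw [List.range_succ, List.map_append, List.prod_append, sum_range_succ]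
    set w := ((List.range n).map fun k => c ^ p k * a ^ q k).prod
    set S := ∑ k ∈ range n, (p k + q k)
    have e : w * ([n].map fun k => c ^ p k * a ^ q k).prod * a ^ (-(S + (p n + q n))) =
        w * a ^ (-S) * (a ^ S * (c ^ p n * a ^ (-p n)) * a ^ (-S)) := by
      simp only [List.map_cons, List.map_nil, List.prod_cons, List.prod_nil, mul_one]
      group
    rw [e]
    refine mul_mem ih ?_
    simpa only [zpow_neg] using
      (mem_normalizer_iff.1 (zpow_mem ha S) _).1 (zpow_mul_zpow_neg_mem ha hca (p n))

end Subgroup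

theorem regular_balanced_even_word_mem_general (m : ℕ) (hm : 1 ≤ m) (r : ℕ → ℤ)
    (a b : FreeGroup Bool)
    (hlast : r (2 * m) = 0)
    (heven : Even (∑ k ∈ Finset.range (2 * m - 1), r (k + 1))) :
    ((List.range m).map
        (fun k => b * a ^ (r (2 * k + 1)) * b⁻¹ * a ^ (r (2 * k + 2)))).prod ∈
      Subgroup.closure ({a ^ 2, b * a ^ 2 * b⁻¹, b * a * b⁻¹ * a⁻¹} :
        Set (FreeGroup Bool)) := by
  set c := b * a * b⁻¹
  have hconj_sq : b * a ^ 2 * b⁻¹ = c ^ 2 := by simp only [c, conj_pow]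
  simp only [hconj_sq, ← conj_zpow]
  set H := closure ({a ^ 2, c ^ 2, c * a⁻¹} : Set (FreeGroup Bool))
  have ha2 : a ^ 2 ∈ H := subset_closure (by simp)
  have hc2 : c ^ 2 ∈ H := subset_closure (by simp)
  have hca : c * a⁻¹ ∈ H := subset_closure (by simp)
  have ha : a ∈ normalizer (H : Set (FreeGroup Bool)) := by
    refine mem_normalizer_of_sq_mem ha2 fun h => conj_mem_closure ?_
    rintro x (rfl | rfl | rfl)
    · rwa [show a * a ^ 2 * a⁻¹ = a ^ 2 by group]
    · rw [show a * c ^ 2 * a⁻¹ = (c * a⁻¹)⁻¹ * c ^ 2 * (c * a⁻¹) by group]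
      exact mul_mem (mul_mem (inv_mem hca) hc2) hca
    · rw [show a * (c * a⁻¹) * a⁻¹ = (c * a⁻¹)⁻¹ * c ^ 2 * (a ^ 2)⁻¹ by group]
      exact mul_mem (mul_mem (inv_mem hca) hc2) (inv_mem ha2)
  have hN : Even (∑ k ∈ range m, (r (2 * k + 1) + r (2 * k + 2))) := by
    rwa [← sum_range_two_mul (fun k => r (k + 1)), ← Nat.sub_add_cancel (by omega : 1 ≤ 2 * m),
      sum_range_succ, Nat.sub_add_cancel (by omega : 1 ≤ 2 * m), hlast, add_zero]
  obtain ⟨t, ht⟩ := hN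
  have hword := prod_zpow_mul_zpow_mul_zpow_neg_sum_mem ha hca
    (fun k => r (2 * k + 1)) (fun k => r (2 * k + 2)) m
  rw [ht, ← mul_mem_cancel_right (zpow_mem ha2 t)] at hword
  rwa [mul_assoc, show a ^ (-(t + t)) * (a ^ 2) ^ t = 1 by group, mul_one] at hword

theorem regular_balanced_even_word_mem (m : ℕ) (hm : 1 ≤ m) (r : ℕ → ℤ)
    (a b : FreeGroup Bool)
    (ha : a = FreeGroup.of true) (hb : b = FreeGroup.of false)
    (hlast : r (2 * m) = 0)
    (heven : Even (∑ k ∈ Finset.range (2 * m - 1), r (k + 1))) :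
    ((List.range m).map
        (fun k => b * a ^ (r (2 * k + 1)) * b⁻¹ * a ^ (r (2 * k + 2)))).prod ∈
      Subgroup.closure ({a ^ 2, b * a ^ 2 * b⁻¹, b * a * b⁻¹ * a⁻¹} :
        Set (FreeGroup Bool)) :=
  regular_balanced_even_word_mem_general m hm r a b hlast heven
end

section
/- If the commutative ring R satisfies the four squares property, then so does the polynomial ring R[x]: whenever p₁² + p₂² + p₃² + p₄² ≡ 0 mod 4 in R[x], one has p₁ ≡ p₂ ≡ p₃ ≡ p₄ mod 2. -/
open Polynomial Finset

private lemma KP_aux {R : Type*} [CommRing R]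
    (hkey : ∀ a b : R, (4 : R) ∣ 2 * (a ^ 2 + a * b + b ^ 2) → (2 : R) ∣ a ∧ (2 : R) ∣ b)
    (A B : Polynomial R) (hd : (4 : Polynomial R) ∣ 2 * (A ^ 2 + A * B + B ^ 2)) :
    (2 : Polynomial R) ∣ A ∧ (2 : Polynomial R) ∣ B := by
  have hcoeff : ∀ m : ℕ, (4 : R) ∣ 2 * ((A ^ 2 + A * B + B ^ 2).coeff m) := by
    obtain ⟨q, hq⟩ := hd
    intro m
    refine ⟨q.coeff m, ?_⟩
    have h2 : (2 : Polynomial R) = C (2 : R) := (map_ofNat C 2).symm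
    have h4 : (4 : Polynomial R) = C (4 : R) := (map_ofNat C 4).symm
    have := congrArg (fun p => Polynomial.coeff p m) hq
    simpa [h2, h4, coeff_C_mul] using this
  have main : ∀ k n : ℕ, A.natDegree + B.natDegree + 1 ≤ n + k →
      (2 : R) ∣ A.coeff n ∧ (2 : R) ∣ B.coeff n := by
    intro k
    induction k with
    | zero =>
      intro n hn
      rw [Polynomial.coeff_eq_zero_of_natDegree_lt (by omega),
        Polynomial.coeff_eq_zero_of_natDegree_lt (by omega)]
      exact ⟨dvd_zero _, dvd_zero _⟩
    | succ k ih =>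
      intro n hn
      have IH : ∀ m, n < m → (2 : R) ∣ A.coeff m ∧ (2 : R) ∣ B.coeff m := by
        intro m hm; exact ih m (by omega)
      set f : ℕ × ℕ → R := fun x =>
        A.coeff x.1 * A.coeff x.2 + A.coeff x.1 * B.coeff x.2 + B.coeff x.1 * B.coeff x.2 with hf
      have hexp : (A ^ 2 + A * B + B ^ 2).coeff (2 * n) = ∑ x ∈ antidiagonal (2 * n), f x := by
        simp only [hf, coeff_add, pow_two, coeff_mul, ← Finset.sum_add_distrib]
      have hmem : ((n, n) : ℕ × ℕ) ∈ antidiagonal (2 * n) := by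
        simp [two_mul]
      have hrest : ∀ x ∈ (antidiagonal (2 * n)).erase (n, n), (4 : R) ∣ 2 * f x := by
        intro x hx
        obtain ⟨hne, hx⟩ := Finset.mem_erase.mp hx
        have hadd : x.1 + x.2 = 2 * n := Finset.HasAntidiagonal.mem_antidiagonal.mp hx
        have hcase : n < x.1 ∨ n < x.2 := by
          by_contra hc
          push_neg at hc
          exact hne (Prod.ext (by omega) (by omega))
        rcases hcase with hi | hj
        · obtain ⟨u, hu⟩ := (IH x.1 hi).1
          obtain ⟨v, hv⟩ := (IH x.1 hi).2
          exact ⟨u * A.coeff x.2 + u * B.coeff x.2 + v * B.coeff x.2, by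
            simp only [hf]; rw [hu, hv]; ring⟩
        · obtain ⟨u, hu⟩ := (IH x.2 hj).1
          obtain ⟨v, hv⟩ := (IH x.2 hj).2
          exact ⟨A.coeff x.1 * u + A.coeff x.1 * v + B.coeff x.1 * v, by
            simp only [hf]; rw [hu, hv]; ring⟩
      have hsplit : 2 * ((A ^ 2 + A * B + B ^ 2).coeff (2 * n)) =
          2 * f (n, n) + ∑ x ∈ (antidiagonal (2 * n)).erase (n, n), 2 * f x := by
        rw [hexp, ← Finset.add_sum_erase _ f hmem, mul_add, Finset.mul_sum]
      have h4T : (4 : R) ∣ 2 * f (n, n) := by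
        have hS : (4 : R) ∣ ∑ x ∈ (antidiagonal (2 * n)).erase (n, n), 2 * f x :=
          Finset.dvd_sum hrest
        have hh := hcoeff (2 * n)
        rw [hsplit] at hh
        have := dvd_sub hh hS
        simpa using this
      exact hkey (A.coeff n) (B.coeff n) (by
        rw [show 2 * (A.coeff n ^ 2 + A.coeff n * B.coeff n + B.coeff n ^ 2) = 2 * f (n, n) by
          simp only [hf]; ring]
        exact h4T)
  have hA : C (2 : R) ∣ A := (Polynomial.C_dvd_iff_dvd_coeff _ _).mpr
    fun nn => (main (A.natDegree + B.natDegree + 1) nn (by omega)).1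
  have hB : C (2 : R) ∣ B := (Polynomial.C_dvd_iff_dvd_coeff _ _).mpr
    fun nn => (main (A.natDegree + B.natDegree + 1) nn (by omega)).2
  have h2 : (2 : Polynomial R) = C (2 : R) := (map_ofNat C 2).symm
  exact ⟨h2 ▸ hA, h2 ▸ hB⟩

theorem four_squares_polynomial_ring (R : Type*) [CommRing R]
    (h : ∀ a b c d : R, (4 : R) ∣ a ^ 2 + b ^ 2 + c ^ 2 + d ^ 2 →
      (2 : R) ∣ a - b ∧ (2 : R) ∣ b - c ∧ (2 : R) ∣ c - d) :
    ∀ p₁ p₂ p₃ p₄ : Polynomial R,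
      (4 : Polynomial R) ∣ p₁ ^ 2 + p₂ ^ 2 + p₃ ^ 2 + p₄ ^ 2 →
      (2 : Polynomial R) ∣ p₁ - p₂ ∧ (2 : Polynomial R) ∣ p₂ - p₃ ∧
        (2 : Polynomial R) ∣ p₃ - p₄ := by
  intro p₁ p₂ p₃ p₄ hdvd
  have hkey : ∀ a b : R, (4 : R) ∣ 2 * (a ^ 2 + a * b + b ^ 2) → (2 : R) ∣ a ∧ (2 : R) ∣ b := by
    intro a b hd
    obtain ⟨h1, h2, h3⟩ := h a 0 b (a + b)
      (by rwa [show a ^ 2 + 0 ^ 2 + b ^ 2 + (a + b) ^ 2 = 2 * (a ^ 2 + a * b + b ^ 2) by ring])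
    refine ⟨by simpa using h1, ?_⟩
    rw [zero_sub] at h2
    exact (dvd_neg).mp h2
  obtain ⟨k, hk⟩ := hdvd
  -- Step 1: 2 divides the sum p₁+p₂+p₃+p₄
  have hs := KP_aux hkey (p₁ + p₂ + p₃ + p₄) 0
    ⟨2 * k + (p₁ * p₂ + p₁ * p₃ + p₁ * p₄ + p₂ * p₃ + p₂ * p₄ + p₃ * p₄), by
      linear_combination (2 : Polynomial R) * hk⟩
  obtain ⟨r, hr⟩ := hs.1
  -- Step 2
  have h2 := KP_aux hkey (p₁ + p₂) (p₂ + p₃)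
    ⟨k + r * (r - p₄) + p₂ ^ 2 + p₁ * p₂ + p₂ * p₃, by
      linear_combination hk + (p₁ + p₂ + p₃ + p₄ + 2 * r - 2 * p₄) * hr⟩
  obtain ⟨h12, h23⟩ := h2
  refine ⟨?_, ?_, ?_⟩
  · have := dvd_sub h12 (dvd_mul_right (2 : Polynomial R) p₂)
    rwa [show p₁ + p₂ - 2 * p₂ = p₁ - p₂ by ring] at this
  · have := dvd_sub h23 (dvd_mul_right (2 : Polynomial R) p₃)
    rwa [show p₂ + p₃ - 2 * p₃ = p₂ - p₃ by ring] at this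
  · have hsd : (2 : Polynomial R) ∣ p₁ + p₂ + p₃ + p₄ := ⟨r, hr⟩
    have := dvd_sub (dvd_sub hsd h12) (dvd_mul_right (2 : Polynomial R) p₄)
    rwa [show p₁ + p₂ + p₃ + p₄ - (p₁ + p₂) - 2 * p₄ = p₃ - p₄ by ring] at this
end

section
/- In the polynomial ring ℝ[u,v], if (u²−1) divides p(u,v)² + (1−v²)q(u,v)² for polynomials p, q, then (u²−1) divides both p and q. -/
open MvPolynomial

noncomputable def phiAux (a : ℝ) : MvPolynomial (Fin 2) ℝ →ₐ[ℝ] Polynomial ℝ :=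
  aeval ![Polynomial.C a, Polynomial.X]

noncomputable def sigmaAux (a : ℝ) : MvPolynomial (Fin 2) ℝ →ₐ[ℝ] MvPolynomial (Fin 2) ℝ :=
  aeval ![C a, X 1]

lemma sigmaAux_eq (a : ℝ) (r : MvPolynomial (Fin 2) ℝ) :
    sigmaAux a r = Polynomial.aeval (X 1 : MvPolynomial (Fin 2) ℝ) (phiAux a r) := by
  have hcomp : sigmaAux a =
      ((Polynomial.aeval (X 1 : MvPolynomial (Fin 2) ℝ)).comp (phiAux a)) := by
    apply MvPolynomial.algHom_ext
    intro i
    fin_cases i <;> simp [sigmaAux, phiAux]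
  exact DFunLike.congr_fun hcomp r

lemma sub_dvd_aux (a : ℝ) (r : MvPolynomial (Fin 2) ℝ) :
    (X 0 - C a : MvPolynomial (Fin 2) ℝ) ∣ (r - sigmaAux a r) := by
  induction r using MvPolynomial.induction_on with
  | C c => simp [sigmaAux]
  | add p q hp hq =>
      have h := dvd_add hp hq
      have : p + q - sigmaAux a (p + q) = (p - sigmaAux a p) + (q - sigmaAux a q) := by
        rw [map_add]; ring
      rw [this]; exact h
  | mul_X p i hp =>
      fin_cases i
      · show (X 0 - C a : MvPolynomial (Fin 2) ℝ) ∣ (p * X 0 - sigmaAux a (p * X 0))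
        have hX : sigmaAux a (X 0) = C a := by simp [sigmaAux]
        have : p * X 0 - sigmaAux a (p * X 0) =
            (p - sigmaAux a p) * X 0 + sigmaAux a p * (X 0 - C a) := by
          rw [map_mul, hX]; ring
        rw [this]
        exact dvd_add (Dvd.dvd.mul_right hp _) (Dvd.dvd.mul_left dvd_rfl _)
      · show (X 0 - C a : MvPolynomial (Fin 2) ℝ) ∣ (p * X 1 - sigmaAux a (p * X 1))
        have hX : sigmaAux a (X 1) = X 1 := by simp [sigmaAux]
        have : p * X 1 - sigmaAux a (p * X 1) = (p - sigmaAux a p) * X 1 := by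
          rw [map_mul, hX]; ring
        rw [this]
        exact Dvd.dvd.mul_right hp _

lemma onevar_aux (P Q : Polynomial ℝ)
    (h : P ^ 2 + (1 - Polynomial.X ^ 2) * Q ^ 2 = 0) : P = 0 ∧ Q = 0 := by
  have key : ∀ x ∈ Set.Ioo (-1 : ℝ) 1, P.eval x = 0 ∧ Q.eval x = 0 := by
    intro x hx
    have h1 : P.eval x ^ 2 + (1 - x ^ 2) * Q.eval x ^ 2 = 0 := by
      have := congrArg (Polynomial.eval x) h
      simpa using this
    have hpos : 0 < 1 - x ^ 2 := by nlinarith [hx.1, hx.2]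
    have hP2 : P.eval x ^ 2 = 0 := by nlinarith [sq_nonneg (P.eval x), sq_nonneg (Q.eval x)]
    have hQ2 : Q.eval x ^ 2 = 0 := by nlinarith [sq_nonneg (P.eval x), sq_nonneg (Q.eval x)]
    exact ⟨pow_eq_zero_iff (by norm_num) |>.mp hP2, pow_eq_zero_iff (by norm_num) |>.mp hQ2⟩
  have hinf : (Set.Ioo (-1 : ℝ) 1).Infinite := Set.Ioo_infinite (by norm_num)
  constructor
  · exact Polynomial.eq_zero_of_infinite_isRoot _ (hinf.mono fun x hx => (key x hx).1)
  · exact Polynomial.eq_zero_of_infinite_isRoot _ (hinf.mono fun x hx => (key x hx).2)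

theorem usq_sub_one_dvd (p q : MvPolynomial (Fin 2) ℝ)
    (h : (MvPolynomial.X 0 ^ 2 - 1 : MvPolynomial (Fin 2) ℝ) ∣
      p ^ 2 + (1 - MvPolynomial.X 1 ^ 2) * q ^ 2) :
    (MvPolynomial.X 0 ^ 2 - 1 : MvPolynomial (Fin 2) ℝ) ∣ p ∧
      (MvPolynomial.X 0 ^ 2 - 1 : MvPolynomial (Fin 2) ℝ) ∣ q := by
  have key : ∀ a : ℝ, a ^ 2 = 1 →
      (X 0 - C a : MvPolynomial (Fin 2) ℝ) ∣ p ∧ (X 0 - C a : MvPolynomial (Fin 2) ℝ) ∣ q := by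
    intro a ha
    obtain ⟨s, hs⟩ := h
    have hphi0 : phiAux a (X 0 ^ 2 - 1 : MvPolynomial (Fin 2) ℝ) = 0 := by
      simp only [phiAux, map_sub, map_pow, map_one, aeval_X, Matrix.cons_val_zero]
      rw [← Polynomial.C_pow, ha]
      simp
    have hS : phiAux a (p ^ 2 + (1 - X 1 ^ 2) * q ^ 2) = 0 := by
      rw [hs, map_mul, hphi0, zero_mul]
    have hS' : (phiAux a p) ^ 2 + (1 - Polynomial.X ^ 2) * (phiAux a q) ^ 2 = 0 := by
      have hX1 : phiAux a (X 1 : MvPolynomial (Fin 2) ℝ) = Polynomial.X := by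
        simp [phiAux]
      simp only [map_add, map_mul, map_pow, map_sub, map_one, hX1] at hS
      exact hS
    obtain ⟨hP, hQ⟩ := onevar_aux _ _ hS'
    have hsp : sigmaAux a p = 0 := by rw [sigmaAux_eq, hP, map_zero]
    have hsq : sigmaAux a q = 0 := by rw [sigmaAux_eq, hQ, map_zero]
    constructor
    · have := sub_dvd_aux a p; rwa [hsp, sub_zero] at this
    · have := sub_dvd_aux a q; rwa [hsq, sub_zero] at this
  obtain ⟨hp1, hq1⟩ := key 1 (by norm_num)
  obtain ⟨hp2, hq2⟩ := key (-1) (by norm_num)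
  rw [C_1] at hp1 hq1
  have hC : (C (-1 : ℝ) : MvPolynomial (Fin 2) ℝ) = -1 := by
    rw [map_neg, C_1]
  rw [hC, sub_neg_eq_add] at hp2 hq2
  have hco : IsCoprime (X 0 - 1 : MvPolynomial (Fin 2) ℝ) (X 0 + 1 : MvPolynomial (Fin 2) ℝ) := by
    refine ⟨-C (2⁻¹ : ℝ), C (2⁻¹ : ℝ), ?_⟩
    have h2 : (C (2⁻¹ : ℝ) : MvPolynomial (Fin 2) ℝ) * 2 = 1 := by
      rw [show ((2 : MvPolynomial (Fin 2) ℝ)) = C (2 : ℝ) from (map_ofNat C 2).symm, ← map_mul]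
      norm_num
    linear_combination h2
  have hfac : (X 0 ^ 2 - 1 : MvPolynomial (Fin 2) ℝ) = (X 0 - 1) * (X 0 + 1) := by ring
  rw [hfac]
  exact ⟨hco.mul_dvd hp1 hp2, hco.mul_dvd hq1 hq2⟩
end

section
/- There exist no rational functions p, q ∈ F(u,v) over the field F = ℤ/pℤ (p an odd prime) satisfying (u²−1)·p(u,v)² + (v²−1)·q(u,v)² = 1; consequently the quaternion algebra ((u²−1, v²−1) / F(u,v)) is a division algebra. -/
noncomputable abbrev Kp (p : ℕ) : Type := FractionRing (MvPolynomial (Fin 2) (ZMod p))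

/-!
Clearing denominators, a solution gives polynomials `a, b, c` over `F = ZMod p` with
`(X₀² - 1) a² + (X₁² - 1) b² = c²` and `c ≠ 0`. Regard them as polynomials in `X₀` over `F[X₁]`.
Setting `X₀ = 1` gives `(X₁² - 1) b(1)² = c(1)²`, and since `X₁² - 1` has a simple root at `1`,
the parity of root multiplicities forces `b(1) = c(1) = 0`. Then `X₀ - 1` divides `b` and `c`,
hence `a` (as `2 ≠ 0`), and the quotients satisfy the same equation; so every power of `X₀ - 1`
divides `c`, and `c = 0`.

A nonzero quaternion `z` with `z z̄ = 0` gives `s² - a t² = b (u² - a w²)` with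
`(s, t, u, w) ≠ 0`. Unless `a` is a square, multiplicativity of the norm form of `K(√a)` makes `b`
such a norm, and in both cases `a x² + b y² = 1` is solvable.
-/

open Polynomial

namespace Polynomial

variable {R : Type*} [CommRing R]

theorem X_sub_one_not_dvd_X_add_one (h2 : (2 : R) ≠ 0) : ¬(X - C 1 : R[X]) ∣ X + C 1 := by
  rintro ⟨t, ht⟩
  simpa [one_add_one_eq_two, h2] using congrArg (eval 1) ht

variable [IsDomain R]

theorem eq_zero_of_mul_sq_eq_sq {f q r : R[X]} {c : R} (hf : Odd (f.rootMultiplicity c))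
    (h : f * q ^ 2 = r ^ 2) : q = 0 := by
  by_contra hq
  have hf0 : f ≠ 0 := by rintro rfl; simp at hf
  have hr : r ≠ 0 := by rintro rfl; simp_all
  have hmult := congrArg (rootMultiplicity c) h
  simp only [sq, rootMultiplicity_mul (mul_ne_zero hf0 (mul_ne_zero hq hq)),
    rootMultiplicity_mul (mul_ne_zero hq hq), rootMultiplicity_mul (mul_ne_zero hr hr)] at hmult
  obtain ⟨k, hk⟩ := hf
  omega

theorem rootMultiplicity_one_X_sq_sub_one (h2 : (2 : R) ≠ 0) :
    (X ^ 2 - 1 : R[X]).rootMultiplicity 1 = 1 := by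
  have hfac : (X ^ 2 - 1 : R[X]) = (X - C 1) * (X + C 1) := by rw [map_one]; ring
  have hne : (X ^ 2 - 1 : R[X]) ≠ 0 := fun h => by simpa using congrArg (eval 0) h
  rw [hfac, rootMultiplicity_mul (hfac ▸ hne), rootMultiplicity_X_sub_C_self,
    rootMultiplicity_eq_zero]
  simpa [one_add_one_eq_two] using h2

theorem exists_X_sq_sub_one_mul_sq_add_eq_sq_and_eq_X_sub_one_mul {d : R} (h2 : (2 : R) ≠ 0)
    (hd : ∀ s t : R, d * s ^ 2 = t ^ 2 → s = 0) {a b c : R[X]}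
    (h : (X ^ 2 - 1) * a ^ 2 + C d * b ^ 2 = c ^ 2) :
    ∃ a' b' c' : R[X], (X ^ 2 - 1) * a' ^ 2 + C d * b' ^ 2 = c' ^ 2 ∧ c = (X - C 1) * c' := by
  have h1 : d * b.eval 1 ^ 2 = c.eval 1 ^ 2 := by simpa using congrArg (eval 1) h
  have hb1 : b.eval 1 = 0 := hd _ _ h1
  have hc1 : c.eval 1 = 0 := by simpa [hb1] using h1.symm
  obtain ⟨b', rfl⟩ := dvd_iff_isRoot.mpr hb1
  obtain ⟨c', rfl⟩ := dvd_iff_isRoot.mpr hc1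
  have hXne : (X - C 1 : R[X]) ≠ 0 := X_sub_C_ne_zero 1
  have ha : (X - C 1 : R[X]) ∣ a := by
    have hdvd : (X - C 1 : R[X]) ∣ (X + C 1) * a ^ 2 := by
      refine ⟨c' ^ 2 - C d * b' ^ 2, mul_left_cancel₀ hXne ?_⟩
      rw [map_one] at h ⊢
      linear_combination h
    rcases (prime_X_sub_C 1).dvd_or_dvd hdvd with h' | h'
    · exact absurd h' (X_sub_one_not_dvd_X_add_one h2)
    · exact (prime_X_sub_C 1).dvd_of_dvd_pow h'
  obtain ⟨a', rfl⟩ := ha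
  refine ⟨a', b', c', mul_left_cancel₀ (pow_ne_zero 2 hXne) ?_, rfl⟩
  linear_combination h

theorem eq_zero_of_X_sq_sub_one_mul_sq_add_eq_sq {d : R} (h2 : (2 : R) ≠ 0)
    (hd : ∀ s t : R, d * s ^ 2 = t ^ 2 → s = 0) {a b c : R[X]}
    (h : (X ^ 2 - 1) * a ^ 2 + C d * b ^ 2 = c ^ 2) : c = 0 := by
  have hpow : ∀ n (a b c : R[X]), (X ^ 2 - 1) * a ^ 2 + C d * b ^ 2 = c ^ 2 →
      (X - C 1) ^ n ∣ c := by
    intro n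
    induction n with
    | zero => simp
    | succ n ih =>
      intro a b c h
      obtain ⟨a', b', c', h', rfl⟩ :=
        exists_X_sq_sub_one_mul_sq_add_eq_sq_and_eq_X_sub_one_mul h2 hd h
      rw [pow_succ']
      exact mul_dvd_mul_left _ (ih a' b' c' h')
  by_contra hc
  have := (le_rootMultiplicity_iff hc).mpr (hpow (c.rootMultiplicity 1 + 1) a b c h)
  omega

end Polynomial

namespace MvPolynomial

variable {R : Type*} [CommRing R] [IsDomain R]

theorem X_sq_sub_one_ne_zero {σ : Type*} (i : σ) : (X i ^ 2 - 1 : MvPolynomial σ R) ≠ 0 :=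
  fun h => by simpa using congrArg (eval 0) h

theorem eq_zero_of_X_sq_sub_one_mul_sq_eq_sq (h2 : (2 : R) ≠ 0) {s t : MvPolynomial (Fin 1) R}
    (h : (X 0 ^ 2 - 1) * s ^ 2 = t ^ 2) : s = 0 := by
  have e : uniqueAlgEquiv R (Fin 1) (X 0 ^ 2 - 1) = Polynomial.X ^ 2 - 1 := by simp
  have h' := congrArg (uniqueAlgEquiv R (Fin 1)) h
  rw [map_mul, map_pow, map_pow, e] at h'
  have := Polynomial.eq_zero_of_mul_sq_eq_sq
    (by rw [rootMultiplicity_one_X_sq_sub_one h2]; exact odd_one) h'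
  exact (map_eq_zero_iff _ (uniqueAlgEquiv R (Fin 1)).injective).mp this

theorem eq_zero_of_X_sq_sub_one_mul_sq_add_X_sq_sub_one_mul_sq_eq_sq (h2 : (2 : R) ≠ 0)
    {a b c : MvPolynomial (Fin 2) R}
    (h : (X 0 ^ 2 - 1) * a ^ 2 + (X 1 ^ 2 - 1) * b ^ 2 = c ^ 2) : c = 0 := by
  have e0 : finSuccEquiv R 1 (X 0 ^ 2 - 1) = Polynomial.X ^ 2 - 1 := by
    simp [finSuccEquiv_X_zero]
  have e1 : finSuccEquiv R 1 (X 1 ^ 2 - 1) = Polynomial.C (X 0 ^ 2 - 1) := by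
    rw [← Fin.succ_zero_eq_one]
    simp only [map_sub, map_pow, map_one, finSuccEquiv_X_succ]
  have h' := congrArg (finSuccEquiv R 1) h
  rw [map_add, map_mul, map_mul, map_pow, map_pow, map_pow, e0, e1] at h'
  have h2' : (2 : MvPolynomial (Fin 1) R) ≠ 0 := by
    rw [← map_ofNat C 2]
    exact (map_ne_zero_iff _ (C_injective _ _)).mpr h2
  have := Polynomial.eq_zero_of_X_sq_sub_one_mul_sq_add_eq_sq h2'
    (fun _ _ => eq_zero_of_X_sq_sub_one_mul_sq_eq_sq h2) h'
  exact (map_eq_zero_iff _ (finSuccEquiv R 1).injective).mp this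

end MvPolynomial

theorem IsFractionRing.exists_mul_sq_add_mul_sq_eq_sq {A K : Type*} [CommRing A] [IsDomain A]
    [Field K] [Algebra A K] [IsFractionRing A K] {d e : A} {x y : K}
    (h : algebraMap A K d * x ^ 2 + algebraMap A K e * y ^ 2 = 1) :
    ∃ a b c : A, c ≠ 0 ∧ d * a ^ 2 + e * b ^ 2 = c ^ 2 := by
  obtain ⟨a, s, hs, rfl⟩ := IsFractionRing.div_surjective (A := A) x
  obtain ⟨b, t, ht, rfl⟩ := IsFractionRing.div_surjective (A := A) y
  have hs0 : algebraMap A K s ≠ 0 := IsFractionRing.to_map_ne_zero_of_mem_nonZeroDivisors hs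
  have ht0 : algebraMap A K t ≠ 0 := IsFractionRing.to_map_ne_zero_of_mem_nonZeroDivisors ht
  refine ⟨a * t, b * s, s * t, mul_ne_zero (nonZeroDivisors.ne_zero hs)
    (nonZeroDivisors.ne_zero ht), IsFractionRing.injective A K ?_⟩
  field_simp at h
  simp only [map_add, map_mul, map_pow]
  linear_combination h

section SumOfTwoSquares

variable {K : Type*} [Field K] {a b : K}

theorem exists_mul_sq_add_mul_sq_eq_one_of_isSquare (ha : a ≠ 0) (hsq : IsSquare a) :
    ∃ x y : K, a * x ^ 2 + b * y ^ 2 = 1 := by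
  obtain ⟨s, rfl⟩ := hsq
  have hs : s ≠ 0 := by rintro rfl; simp at ha
  exact ⟨s⁻¹, 0, by field_simp; ring⟩

theorem exists_mul_sq_add_mul_sq_eq_one_of_eq_sq_sub_mul_sq (h2 : (2 : K) ≠ 0) (hb : b ≠ 0)
    {s t : K} (h : b = s ^ 2 - a * t ^ 2) : ∃ x y : K, a * x ^ 2 + b * y ^ 2 = 1 := by
  by_cases hs : s = 0
  · subst hs
    have ht : t ≠ 0 := by rintro rfl; simp_all
    have ha : a ≠ 0 := by rintro rfl; simp_all
    -- `b = -a t²`, so we need `a (x - t y) (x + t y) = 1`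
    refine ⟨(1 + a⁻¹) / 2, (a⁻¹ - 1) / (2 * t), ?_⟩
    rw [h]
    field_simp
    ring
  · exact ⟨t / s, 1 / s, by rw [h]; field_simp; ring⟩

theorem eq_zero_of_sq_sub_mul_sq_eq_zero (hsq : ¬IsSquare a) {s t : K}
    (h : s ^ 2 - a * t ^ 2 = 0) : s = 0 ∧ t = 0 := by
  have ht : t = 0 := by
    by_contra ht
    exact hsq ⟨s / t, by field_simp; linear_combination -h⟩
  subst ht
  exact ⟨pow_eq_zero_iff two_ne_zero |>.mp (by simpa using h), rfl⟩

theorem exists_mul_sq_add_mul_sq_eq_one_of_sq_sub_mul_sq_eq_mul (h2 : (2 : K) ≠ 0) (ha : a ≠ 0)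
    (hb : b ≠ 0) {s t u w : K} (hne : ¬(s = 0 ∧ t = 0 ∧ u = 0 ∧ w = 0))
    (h : s ^ 2 - a * t ^ 2 = b * (u ^ 2 - a * w ^ 2)) :
    ∃ x y : K, a * x ^ 2 + b * y ^ 2 = 1 := by
  by_cases hsq : IsSquare a
  · exact exists_mul_sq_add_mul_sq_eq_one_of_isSquare ha hsq
  by_cases huw : u ^ 2 - a * w ^ 2 = 0
  · obtain ⟨rfl, rfl⟩ := eq_zero_of_sq_sub_mul_sq_eq_zero hsq huw
    obtain ⟨rfl, rfl⟩ := eq_zero_of_sq_sub_mul_sq_eq_zero hsq (by simpa using h)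
    exact absurd ⟨rfl, rfl, rfl, rfl⟩ hne
  -- `(s² - a t²)(u² - a w²) = (s u + a t w)² - a (s w + t u)²`
  refine exists_mul_sq_add_mul_sq_eq_one_of_eq_sq_sub_mul_sq h2 hb
    (s := (s * u + a * t * w) / (u ^ 2 - a * w ^ 2))
    (t := (s * w + t * u) / (u ^ 2 - a * w ^ 2)) ?_
  field_simp
  linear_combination -(u ^ 2 - a * w ^ 2) * h

end SumOfTwoSquares

namespace QuaternionAlgebra

theorem re_self_mul_star {R : Type*} [CommRing R] {a b : R} (z : QuaternionAlgebra R a 0 b) :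
    (z * star z).re = z.re ^ 2 - a * z.imI ^ 2 - b * z.imJ ^ 2 + a * b * z.imK ^ 2 := by
  simp only [re_mul, re_star, imI_star, imJ_star, imK_star]
  ring

variable {K : Type*} [Field K]

theorem isUnit_of_re_self_mul_star_ne_zero {c₁ c₂ c₃ : K} {z : QuaternionAlgebra K c₁ c₂ c₃}
    (hz : (z * star z).re ≠ 0) : IsUnit z := by
  set n := (z * star z).re
  have hmul : z * ((n⁻¹ : K) • star z) = 1 := by
    rw [mul_smul_comm, mul_star_eq_coe, ← coe_mul_eq_smul, ← coe_mul, inv_mul_cancel₀ hz, coe_one]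
  have hmul' : ((n⁻¹ : K) • star z) * z = 1 := by
    rw [smul_mul_assoc, star_comm_self', mul_star_eq_coe, ← coe_mul_eq_smul, ← coe_mul,
      inv_mul_cancel₀ hz, coe_one]
  exact ⟨⟨z, _, hmul, hmul'⟩, rfl⟩

theorem isUnit_of_ne_zero {a b : K} (h2 : (2 : K) ≠ 0) (ha : a ≠ 0) (hb : b ≠ 0)
    (hns : ¬∃ x y : K, a * x ^ 2 + b * y ^ 2 = 1) {z : QuaternionAlgebra K a 0 b} (hz : z ≠ 0) :
    IsUnit z := by
  refine isUnit_of_re_self_mul_star_ne_zero fun h0 => hns ?_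
  rw [re_self_mul_star] at h0
  refine exists_mul_sq_add_mul_sq_eq_one_of_sq_sub_mul_sq_eq_mul h2 ha hb
    (s := z.re) (t := z.imI) (u := z.imJ) (w := z.imK) ?_ (by linear_combination h0)
  rintro ⟨h₁, h₂, h₃, h₄⟩
  exact hz (QuaternionAlgebra.ext h₁ h₂ h₃ h₄)

end QuaternionAlgebra

theorem quaternion_division_algebra (p : ℕ) [Fact p.Prime] (hp : Odd p)
    (u v : Kp p)
    (hu : u = algebraMap (MvPolynomial (Fin 2) (ZMod p)) (Kp p) (MvPolynomial.X 0))
    (hv : v = algebraMap (MvPolynomial (Fin 2) (ZMod p)) (Kp p) (MvPolynomial.X 1)) :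
    (¬ ∃ x y : Kp p, (u ^ 2 - 1) * x ^ 2 + (v ^ 2 - 1) * y ^ 2 = 1) ∧
    (∀ z : QuaternionAlgebra (Kp p) (u ^ 2 - 1) 0 (v ^ 2 - 1), z ≠ 0 → IsUnit z) := by
  have h2 : (2 : ZMod p) ≠ 0 :=
    Ring.two_ne_zero (by rw [ZMod.ringChar_zmod_n]; rintro rfl; exact absurd hp (by decide))
  have hmap : ∀ i : Fin 2, algebraMap (MvPolynomial (Fin 2) (ZMod p)) (Kp p) (MvPolynomial.X i ^ 2 - 1) ≠ 0 := fun i =>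
    IsFractionRing.to_map_ne_zero_of_mem_nonZeroDivisors
      (mem_nonZeroDivisors_of_ne_zero (MvPolynomial.X_sq_sub_one_ne_zero i))
  have hu' : algebraMap (MvPolynomial (Fin 2) (ZMod p)) (Kp p) (MvPolynomial.X 0 ^ 2 - 1) = u ^ 2 - 1 := by simp [hu]
  have hv' : algebraMap (MvPolynomial (Fin 2) (ZMod p)) (Kp p) (MvPolynomial.X 1 ^ 2 - 1) = v ^ 2 - 1 := by simp [hv]
  have hns : ¬ ∃ x y : Kp p, (u ^ 2 - 1) * x ^ 2 + (v ^ 2 - 1) * y ^ 2 = 1 := by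
    rintro ⟨x, y, h⟩
    rw [← hu', ← hv'] at h
    obtain ⟨a, b, c, hc, habc⟩ := IsFractionRing.exists_mul_sq_add_mul_sq_eq_sq h
    exact hc (MvPolynomial.eq_zero_of_X_sq_sub_one_mul_sq_add_X_sq_sub_one_mul_sq_eq_sq h2 habc)
  have h2K : (2 : Kp p) ≠ 0 := by
    rw [← map_ofNat (algebraMap (ZMod p) (Kp p)) 2]
    exact (_root_.map_ne_zero _).mpr h2
  exact ⟨hns, fun z hz =>
    QuaternionAlgebra.isUnit_of_ne_zero h2K (hu' ▸ hmap 0) (hv' ▸ hmap 1) hns hz⟩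
end
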